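/- Let Z = f(X, X̃) with X, X̃ independent and f measurable real-valued, let (Z_j^1, Z_j^2), j = 1,…,N, be i.i.d. copies of the Pick-and-Freeze pair (f(X, X̃), f(X, X̃')) (X̃' an independent copy of X̃), and let W_1, …, W_N be an independent i.i.d. sample with the law of Z, independent of the pairs. Define D̂_N = N^{-1} Σ_{k=1}^N { N^{-1} Σ_{j=1}^N 1{Z_j^1 ≤ W_k} 1{Z_j^2 ≤ W_k} − [ (2N)^{-1} Σ_{j=1}^N (1{Z_j^1 ≤ W_k} + 1{Z_j^2 ≤ W_k}) ]² }. Then D̂_N converges almost surely, as N → ∞, to the Cramér–von Mises index D = ∫_ℝ E[(F(t) − F^v(t))²] dF(t). -/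

import Mathlib

open MeasureTheory ProbabilityTheory Filter Set

namespace CvMAux

noncomputable def cdfR (μ : Measure ℝ) (t : ℝ) : ℝ := (μ (Set.Iic t)).toReal
noncomputable def cdfL (μ : Measure ℝ) (t : ℝ) : ℝ := (μ (Set.Iio t)).toReal
noncomputable def quant (μ : Measure ℝ) (c : ℝ) : ℝ := sInf {x | c ≤ cdfR μ x}

variable {μ : Measure ℝ} [IsProbabilityMeasure μ]

lemma cdfR_eq_cdf (t : ℝ) : cdfR μ t = cdf μ t := (cdf_eq_real μ t).symm

lemma cdfR_mono : Monotone (cdfR μ) := by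
  intro s t hst
  exact ENNReal.toReal_mono (measure_ne_top _ _) (measure_mono (Iic_subset_Iic.2 hst))

lemma cdfR_nonneg (t : ℝ) : 0 ≤ cdfR μ t := ENNReal.toReal_nonneg

lemma cdfR_le_one (t : ℝ) : cdfR μ t ≤ 1 := by
  rw [cdfR_eq_cdf]; exact cdf_le_one μ t

lemma cdfL_le_cdfR (t : ℝ) : cdfL μ t ≤ cdfR μ t :=
  ENNReal.toReal_mono (measure_ne_top _ _) (measure_mono Iio_subset_Iic_self)

lemma cdfR_le_cdfL {s t : ℝ} (hst : s < t) : cdfR μ s ≤ cdfL μ t :=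
  ENNReal.toReal_mono (measure_ne_top _ _) (measure_mono (Iic_subset_Iio.2 hst))

lemma cdfL_nonneg (t : ℝ) : 0 ≤ cdfL μ t := ENNReal.toReal_nonneg

lemma cdfL_le_one (t : ℝ) : cdfL μ t ≤ 1 := le_trans (cdfL_le_cdfR t) (cdfR_le_one t)

lemma quant_set_nonempty {c : ℝ} (hc1 : c < 1) : {x | c ≤ cdfR μ x}.Nonempty := by
  have h := (tendsto_cdf_atTop μ).eventually (eventually_ge_nhds hc1)
  obtain ⟨x, hx⟩ := h.exists
  exact ⟨x, by rwa [Set.mem_setOf_eq, cdfR_eq_cdf]⟩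

lemma quant_set_bddBelow {c : ℝ} (hc0 : 0 < c) : BddBelow {x | c ≤ cdfR μ x} := by
  have h := (tendsto_cdf_atBot μ).eventually (eventually_lt_nhds hc0)
  obtain ⟨y, hy⟩ := h.exists
  refine ⟨y, fun x hx => ?_⟩
  by_contra hxy
  push_neg at hxy
  rw [Set.mem_setOf_eq, cdfR_eq_cdf] at hx
  exact absurd (le_trans hx (monotone_cdf μ hxy.le)) (not_le.2 hy)

lemma le_cdfR_quant {c : ℝ} (hc0 : 0 < c) (hc1 : c < 1) : c ≤ cdfR μ (quant μ c) := by
  have hne := quant_set_nonempty (μ := μ) hc1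
  have hbd := quant_set_bddBelow (μ := μ) hc0
  have hq : quant μ c ∈ closure {x | c ≤ cdfR μ x} := csInf_mem_closure hne hbd
  have hsub : {x | c ≤ cdfR μ x} ⊆ Ici (quant μ c) := fun x hx => csInf_le hbd hx
  have hcont : ContinuousWithinAt (cdf μ) {x | c ≤ cdfR μ x} (quant μ c) :=
    ((cdf μ).right_continuous (quant μ c)).mono hsub
  have hne' : (nhdsWithin (quant μ c) {x | c ≤ cdfR μ x}).NeBot :=
    mem_closure_iff_nhdsWithin_neBot.1 hq
  rw [cdfR_eq_cdf]
  refine ge_of_tendsto hcont ?_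
  filter_upwards [self_mem_nhdsWithin] with x hx
  rw [← cdfR_eq_cdf]
  exact hx

lemma cdfL_quant_le {c : ℝ} (hc0 : 0 < c) (hc1 : c < 1) : cdfL μ (quant μ c) ≤ c := by
  set q := quant μ c with hq
  have hlt : ∀ z, z < q → cdfR μ z < c := by
    intro z hz
    by_contra h
    push_neg at h
    exact absurd (csInf_le (quant_set_bddBelow hc0) h) (not_le.2 hz)
  have hIio : Iio q = ⋃ n : ℕ, Iic (q - ((n : ℝ) + 1)⁻¹) := by
    ext x
    simp only [mem_Iio, mem_iUnion, mem_Iic]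
    constructor
    · intro hx
      obtain ⟨n, hn⟩ := exists_nat_one_div_lt (sub_pos.2 hx)
      exact ⟨n, by rw [one_div] at hn; linarith⟩
    · rintro ⟨n, hn⟩
      have : (0:ℝ) < ((n:ℝ)+1)⁻¹ := by positivity
      linarith
  have hdir : Monotone fun n : ℕ => Iic (q - ((n : ℝ) + 1)⁻¹) := by
    intro a b hab
    apply Iic_subset_Iic.2
    have hab' : (a:ℝ) ≤ (b:ℝ) := Nat.cast_le.2 hab
    have : ((b:ℝ)+1)⁻¹ ≤ ((a:ℝ)+1)⁻¹ := by
      apply inv_anti₀ (by positivity)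
      linarith
    linarith
  have : μ (Iio q) ≤ ENNReal.ofReal c := by
    rw [hIio, hdir.directed_le.measure_iUnion]
    refine iSup_le fun n => ?_
    have hz : q - ((n:ℝ)+1)⁻¹ < q := by
      have : (0:ℝ) < ((n:ℝ)+1)⁻¹ := by positivity
      linarith
    have := (hlt _ hz).le
    calc μ (Iic (q - ((n:ℝ)+1)⁻¹)) = ENNReal.ofReal (cdfR μ (q - ((n:ℝ)+1)⁻¹)) := by
          rw [cdfR, ENNReal.ofReal_toReal (measure_ne_top _ _)]
      _ ≤ ENNReal.ofReal c := ENNReal.ofReal_le_ofReal this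
  exact ENNReal.toReal_le_of_le_ofReal hc0.le this

lemma quant_mono {c c' : ℝ} (h0 : 0 < c) (hcc : c ≤ c') (h1 : c' < 1) :
    quant μ c ≤ quant μ c' :=
  csInf_le_csInf (quant_set_bddBelow h0) (quant_set_nonempty h1)
    (fun x hx => le_trans hcc hx)


lemma gc_det {μ : Measure ℝ} [IsProbabilityMeasure μ] {m : ℕ} (hm : 2 ≤ m) {δ : ℝ} (hδ : 0 ≤ δ)
    (G Gm : ℝ → ℝ) (hGmono : Monotone G) (hGGm : ∀ s t : ℝ, s < t → G s ≤ Gm t)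
    (hG0 : ∀ t, 0 ≤ G t) (hG1 : ∀ t, G t ≤ 1)
    (hclose : ∀ i ∈ Finset.Icc 1 (m-1),
      |G (quant μ ((i:ℝ)/m)) - cdfR μ (quant μ ((i:ℝ)/m))| ≤ δ
      ∧ |Gm (quant μ ((i:ℝ)/m)) - cdfL μ (quant μ ((i:ℝ)/m))| ≤ δ) :
    ∀ t, |G t - cdfR μ t| ≤ (m:ℝ)⁻¹ + 2*δ := by
  intro t
  have hm0 : 0 < m := by omega
  have hmR : (0:ℝ) < m := by exact_mod_cast hm0
  have hc : ∀ i ∈ Finset.Icc 1 (m-1), 0 < (i:ℝ)/m ∧ (i:ℝ)/m < 1 := by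
    intro i hi
    rw [Finset.mem_Icc] at hi
    have h1 : (1:ℝ) ≤ i := by exact_mod_cast hi.1
    have h2 : (i:ℝ) < m := by
      have : i < m := by omega
      exact_mod_cast this
    constructor
    · positivity
    · rw [div_lt_one hmR]; exact h2
  set I := (Finset.Icc 1 (m-1)).filter (fun i : ℕ => quant μ ((i:ℝ)/m) ≤ t) with hI
  by_cases hne : I.Nonempty
  · set i := I.max' hne with hidef
    have himem : i ∈ I := I.max'_mem hne
    rw [hI, Finset.mem_filter] at himem
    obtain ⟨hiIcc, hit⟩ := himem
    have hci := hc i hiIcc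
    have hFq : (i:ℝ)/m ≤ cdfR μ (quant μ ((i:ℝ)/m)) := le_cdfR_quant hci.1 hci.2
    have hGq := (hclose i hiIcc).1
    -- lower bounds
    have hFt_lb : (i:ℝ)/m ≤ cdfR μ t := le_trans hFq (cdfR_mono hit)
    have hGt_lb : (i:ℝ)/m - δ ≤ G t := by
      have := hGmono hit
      have h' : cdfR μ (quant μ ((i:ℝ)/m)) - δ ≤ G (quant μ ((i:ℝ)/m)) := by
        have := abs_le.1 hGq; linarith [this.2]
      linarith
    -- upper bounds
    by_cases him : i = m - 1
    · have hcii : (i:ℝ)/m = 1 - (m:ℝ)⁻¹ := by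
        rw [him]
        have : ((m-1 : ℕ) : ℝ) = (m:ℝ) - 1 := by
          have : (1:ℕ) ≤ m := by omega
          push_cast [this]; ring
        rw [this]
        field_simp
      have hF1 : cdfR μ t ≤ 1 := cdfR_le_one t
      have hG1t : G t ≤ 1 := hG1 t
      rw [hcii] at hFt_lb hGt_lb
      rw [abs_sub_le_iff]
      constructor <;> linarith
    · have hisucc : i + 1 ∈ Finset.Icc 1 (m-1) := by
        rw [Finset.mem_Icc] at hiIcc ⊢; omega
      have hci1 := hc (i+1) hisucc
      have ht1 : t < quant μ (((i+1:ℕ):ℝ)/m) := by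
        by_contra h
        push_neg at h
        have : (i+1) ∈ I := by rw [hI, Finset.mem_filter]; exact ⟨hisucc, h⟩
        have := I.le_max' (i+1) this
        omega
      have hcs : (((i+1:ℕ)):ℝ)/m = (i:ℝ)/m + (m:ℝ)⁻¹ := by push_cast; field_simp
      have hFmq : cdfL μ (quant μ (((i+1:ℕ):ℝ)/m)) ≤ ((i+1:ℕ):ℝ)/m :=
        cdfL_quant_le hci1.1 hci1.2
      have hFt_ub : cdfR μ t ≤ (i:ℝ)/m + (m:ℝ)⁻¹ := by
        have := cdfR_le_cdfL (μ := μ) ht1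
        linarith [hcs]
      have hGt_ub : G t ≤ (i:ℝ)/m + (m:ℝ)⁻¹ + δ := by
        have h1 := hGGm t _ ht1
        have h2 := (abs_le.1 (hclose (i+1) hisucc).2).2
        linarith [hcs]
      rw [abs_sub_le_iff]
      constructor <;> linarith
  · have h1mem : 1 ∈ Finset.Icc 1 (m-1) := by rw [Finset.mem_Icc]; omega
    have hc1 := hc 1 h1mem
    have ht1 : t < quant μ (((1:ℕ):ℝ)/m) := by
      by_contra h
      push_neg at h
      exact hne ⟨1, by rw [hI, Finset.mem_filter]; exact ⟨h1mem, h⟩⟩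
    have hFmq : cdfL μ (quant μ (((1:ℕ):ℝ)/m)) ≤ ((1:ℕ):ℝ)/m := cdfL_quant_le hc1.1 hc1.2
    have h1m : ((1:ℕ):ℝ)/m = (m:ℝ)⁻¹ := by push_cast; rw [one_div]
    have hFt : cdfR μ t ≤ (m:ℝ)⁻¹ := by
      have := cdfR_le_cdfL (μ := μ) ht1
      linarith [h1m]
    have hGt : G t ≤ (m:ℝ)⁻¹ + δ := by
      have h1 := hGGm t _ ht1
      have h2 := (abs_le.1 (hclose 1 h1mem).2).2
      linarith [h1m]
    rw [abs_sub_le_iff]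
    constructor
    · linarith [cdfR_nonneg (μ := μ) t]
    · linarith [hG0 t]


section Prob

variable {Ω : Type*} [m0 : MeasurableSpace Ω] {P : Measure Ω} [IsProbabilityMeasure P]

/-- SLLN for indicators: the empirical measure of a set converges a.s. -/
lemma empirical_tendsto (Y : ℕ → Ω → ℝ) (hmeas : ∀ i, AEMeasurable (Y i) P)
    (hindep : Pairwise fun i j => IndepFun (Y i) (Y j) P)
    (hident : ∀ i, Measure.map (Y i) P = Measure.map (Y 0) P)
    (s : Set ℝ) (hs : MeasurableSet s) :
    ∀ᵐ ω ∂P, Tendsto (fun N : ℕ => (N : ℝ)⁻¹ * ∑ j ∈ Finset.range N,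
      s.indicator (fun _ => (1:ℝ)) (Y j ω)) atTop
      (nhds ((Measure.map (Y 0) P s).toReal)) := by
  set u : ℝ → ℝ := s.indicator (fun _ => (1:ℝ)) with hu
  have hum : Measurable u := measurable_const.indicator hs
  set X : ℕ → Ω → ℝ := fun j ω => u (Y j ω) with hX
  have hXid : ∀ i, IdentDistrib (X i) (X 0) P P := fun i =>
    (IdentDistrib.comp ⟨hmeas i, hmeas 0, hident i⟩ hum)
  have hXint : Integrable (X 0) P := by
    refine Integrable.mono' (integrable_const 1)
      (hum.comp_aemeasurable (hmeas 0)).aestronglyMeasurable ?_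
    filter_upwards with ω
    by_cases h : Y 0 ω ∈ s <;> simp [X, u, Set.indicator_apply, h]
  have hXindep : Pairwise (Function.onFun (IndepFun · · P) X) := fun i j hij =>
    (hindep hij).comp hum hum
  have hmean : P[X 0] = ((Measure.map (Y 0) P) s).toReal := by
    have h1 : ∫ ω, X 0 ω ∂P = ∫ x, u x ∂(Measure.map (Y 0) P) := by
      rw [integral_map (hmeas 0) hum.aestronglyMeasurable]
    rw [h1, hu, integral_indicator hs, setIntegral_const, smul_eq_mul, mul_one]
    rfl
  have := strong_law_ae_real X hXint hXindep hXid
  rw [hmean] at this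
  filter_upwards [this] with ω hω
  convert hω using 2 with N
  rw [inv_mul_eq_div]


lemma glivenko_cantelli (Y : ℕ → Ω → ℝ) (hmeas : ∀ i, AEMeasurable (Y i) P)
    (hindep : Pairwise fun i j => IndepFun (Y i) (Y j) P)
    (hident : ∀ i, Measure.map (Y i) P = Measure.map (Y 0) P) :
    ∀ᵐ ω ∂P, ∀ ε : ℝ, 0 < ε → ∀ᶠ N : ℕ in atTop, ∀ t : ℝ,
      |((N:ℝ)⁻¹ * ∑ j ∈ Finset.range N, (Set.Iic t).indicator (fun _ => (1:ℝ)) (Y j ω))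
        - cdfR (Measure.map (Y 0) P) t| ≤ ε := by
  set μ := Measure.map (Y 0) P with hμ
  haveI : IsProbabilityMeasure μ := Measure.isProbabilityMeasure_map (hmeas 0)
  have hAE : ∀ᵐ ω ∂P, ∀ m : ℕ, ∀ i : ℕ,
      Tendsto (fun N : ℕ => (N:ℝ)⁻¹ * ∑ j ∈ Finset.range N,
        (Set.Iic (quant μ ((i:ℝ)/m))).indicator (fun _ => (1:ℝ)) (Y j ω)) atTop
        (nhds (cdfR μ (quant μ ((i:ℝ)/m)))) ∧
      Tendsto (fun N : ℕ => (N:ℝ)⁻¹ * ∑ j ∈ Finset.range N,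
        (Set.Iio (quant μ ((i:ℝ)/m))).indicator (fun _ => (1:ℝ)) (Y j ω)) atTop
        (nhds (cdfL μ (quant μ ((i:ℝ)/m)))) := by
    rw [ae_all_iff]
    intro m
    rw [ae_all_iff]
    intro i
    exact (empirical_tendsto Y hmeas hindep hident _ measurableSet_Iic).and
      (empirical_tendsto Y hmeas hindep hident _ measurableSet_Iio)
  filter_upwards [hAE] with ω hω
  intro ε hε
  obtain ⟨m, hm⟩ := exists_nat_gt (max 2 (2/ε))
  have hm2 : 2 ≤ m := by
    have := le_trans (le_max_left 2 (2/ε)) hm.le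
    exact_mod_cast this
  have hminv : (m:ℝ)⁻¹ ≤ ε/2 := by
    have h2ε : 2/ε < m := lt_of_le_of_lt (le_max_right _ _) hm
    have hmpos : (0:ℝ) < m := by
      have : (2:ℝ) ≤ m := by exact_mod_cast hm2
      linarith
    rw [div_lt_iff₀ hε] at h2ε
    have hinv : (m:ℝ)⁻¹ * m = 1 := inv_mul_cancel₀ (ne_of_gt hmpos)
    nlinarith [mul_pos (inv_pos.2 hmpos) hε]
  set δ := ε/4 with hδdef
  have hδpos : 0 < δ := by positivity
  have hev : ∀ᶠ N : ℕ in atTop, ∀ i ∈ Finset.Icc 1 (m-1),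
      |((N:ℝ)⁻¹ * ∑ j ∈ Finset.range N,
          (Set.Iic (quant μ ((i:ℝ)/m))).indicator (fun _ => (1:ℝ)) (Y j ω))
        - cdfR μ (quant μ ((i:ℝ)/m))| ≤ δ ∧
      |((N:ℝ)⁻¹ * ∑ j ∈ Finset.range N,
          (Set.Iio (quant μ ((i:ℝ)/m))).indicator (fun _ => (1:ℝ)) (Y j ω))
        - cdfL μ (quant μ ((i:ℝ)/m))| ≤ δ := by
    rw [Filter.eventually_all_finset]
    intro i _
    have h1 := (hω m i).1.eventually (Metric.closedBall_mem_nhds _ hδpos)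
    have h2 := (hω m i).2.eventually (Metric.closedBall_mem_nhds _ hδpos)
    filter_upwards [h1, h2] with N hN1 hN2
    rw [Real.dist_eq] at hN1 hN2
    exact ⟨hN1, hN2⟩
  filter_upwards [hev] with N hN
  intro t
  have key := gc_det (μ := μ) hm2 hδpos.le
    (fun t => (N:ℝ)⁻¹ * ∑ j ∈ Finset.range N, (Set.Iic t).indicator (fun _ => (1:ℝ)) (Y j ω))
    (fun t => (N:ℝ)⁻¹ * ∑ j ∈ Finset.range N, (Set.Iio t).indicator (fun _ => (1:ℝ)) (Y j ω))
    ?_ ?_ ?_ ?_ hN t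
  · calc |_| ≤ (m:ℝ)⁻¹ + 2*δ := key
      _ ≤ ε/2 + 2*(ε/4) := by linarith
      _ = ε := by ring
  · intro s t hst
    refine mul_le_mul_of_nonneg_left (Finset.sum_le_sum fun j _ =>
      Set.indicator_le_indicator_of_subset (Set.Iic_subset_Iic.2 hst) (fun _ => zero_le_one) _)
      (by positivity)
  · intro s t hst
    refine mul_le_mul_of_nonneg_left (Finset.sum_le_sum fun j _ =>
      Set.indicator_le_indicator_of_subset (Set.Iic_subset_Iio.2 hst) (fun _ => zero_le_one) _)
      (by positivity)
  · intro t
    exact mul_nonneg (by positivity)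
      (Finset.sum_nonneg fun j _ => Set.indicator_nonneg (fun _ _ => zero_le_one) _)
  · intro t
    rcases Nat.eq_zero_or_pos N with h | h
    · simp [h]
    · have hub : ∀ y : ℝ, (Set.Iic t).indicator (fun _ => (1:ℝ)) y ≤ 1 := by
        intro y
        by_cases hy : y ∈ Set.Iic t <;> simp [Set.indicator_apply, hy]
      have hsum : ∑ j ∈ Finset.range N, (Set.Iic t).indicator (fun _ => (1:ℝ)) (Y j ω) ≤ N := by
        calc ∑ j ∈ Finset.range N, (Set.Iic t).indicator (fun _ => (1:ℝ)) (Y j ω)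
            ≤ ∑ _j ∈ Finset.range N, (1:ℝ) := Finset.sum_le_sum fun j _ => hub _
          _ = N := by simp
      have hNpos : (0:ℝ) < N := by exact_mod_cast h
      calc (N:ℝ)⁻¹ * ∑ j ∈ Finset.range N, (Set.Iic t).indicator (fun _ => (1:ℝ)) (Y j ω)
          ≤ (N:ℝ)⁻¹ * N := mul_le_mul_of_nonneg_left hsum (by positivity)
        _ = 1 := by field_simp

end Prob


section CondExp

variable {Ω : Type*} {E E' : Type*} [m0 : MeasurableSpace Ω] [mE : MeasurableSpace E]
  [mE' : MeasurableSpace E'] {P : Measure Ω} [IsProbabilityMeasure P]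

lemma integrand_eq (X : Ω → E) (Xt Xt' : Ω → E')
    (hX : Measurable X) (hXt : Measurable Xt) (hXt' : Measurable Xt')
    (f : E × E' → ℝ) (hf : Measurable f)
    (hpair : Measure.map (fun ω => (X ω, Xt ω)) P = (Measure.map X P).prod (Measure.map Xt P))
    (htrip : Measure.map (fun ω => (X ω, (Xt ω, Xt' ω))) P
      = (Measure.map X P).prod ((Measure.map Xt P).prod (Measure.map Xt P)))
    (t : ℝ) (Ft : ℝ) (hFt : Ft = (P {ω | f (X ω, Xt ω) ≤ t}).toReal) :
    ∫ ω, (Ft - MeasureTheory.condExp (MeasurableSpace.comap X mE) P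
        (Set.indicator {ω | f (X ω, Xt ω) ≤ t} fun _ => (1 : ℝ)) ω) ^ 2 ∂P
      = (P ({ω | f (X ω, Xt ω) ≤ t} ∩ {ω | f (X ω, Xt' ω) ≤ t})).toReal - Ft ^ 2 := by
  set ν := Measure.map X P with hν
  set κ := Measure.map Xt P with hκ
  haveI : IsProbabilityMeasure ν := Measure.isProbabilityMeasure_map hX.aemeasurable
  haveI : IsProbabilityMeasure κ := Measure.isProbabilityMeasure_map hXt.aemeasurable
  set S : Set (E × E') := f ⁻¹' (Set.Iic t) with hSdef
  have hS : MeasurableSet S := hf measurableSet_Iic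
  set g : E → ENNReal := fun x => κ (Prod.mk x ⁻¹' S) with hgdef
  have hg : Measurable g := measurable_measure_prodMk_left hS
  set φ : E → ℝ := fun x => (g x).toReal with hφdef
  have hφ : Measurable φ := hg.ennreal_toReal
  have hgle : ∀ x, g x ≤ 1 := fun x => prob_le_one
  have hφ01 : ∀ x, 0 ≤ φ x ∧ φ x ≤ 1 := fun x =>
    ⟨ENNReal.toReal_nonneg, ENNReal.toReal_le_of_le_ofReal one_pos.le (by simpa using hgle x)⟩
  set A : Set Ω := {ω | f (X ω, Xt ω) ≤ t} with hAdef
  have hAeq : A = (fun ω => (X ω, Xt ω)) ⁻¹' S := rfl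
  have hpm : Measurable (fun ω => (X ω, Xt ω)) := hX.prodMk hXt
  have hAm : MeasurableSet A := hpm hS
  -- key identity
  have hkeyB : ∀ B : Set E, MeasurableSet B → P (A ∩ X ⁻¹' B) = ∫⁻ x in B, g x ∂ν := by
    intro B hB
    have h1 : A ∩ X ⁻¹' B = (fun ω => (X ω, Xt ω)) ⁻¹' (S ∩ B ×ˢ Set.univ) := by
      ext ω; simp [hAeq, Set.mem_prod]
    rw [h1, ← Measure.map_apply hpm (hS.inter (hB.prod MeasurableSet.univ)), hpair,
      Measure.prod_apply (hS.inter (hB.prod MeasurableSet.univ))]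
    rw [← lintegral_indicator hB]
    refine lintegral_congr fun x => ?_
    by_cases hx : x ∈ B
    · rw [Set.indicator_of_mem hx]
      congr 1
      ext y; simp [hx]
    · rw [Set.indicator_of_notMem hx]
      convert measure_empty
      · ext y; simp [hx]
      · infer_instance
  have hPA : P A = ∫⁻ x, g x ∂ν := by
    have := hkeyB Set.univ MeasurableSet.univ
    simpa using this
  -- integrability of φ and φ²
  have hφint : Integrable φ ν := by
    refine Integrable.mono' (integrable_const 1) hφ.aestronglyMeasurable ?_
    filter_upwards with x
    rw [Real.norm_eq_abs, abs_of_nonneg (hφ01 x).1]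
    exact (hφ01 x).2
  have hφsqint : Integrable (fun x => φ x ^ 2) ν := by
    refine Integrable.mono' (integrable_const 1) (hφ.pow_const 2).aestronglyMeasurable ?_
    filter_upwards with x
    rw [Real.norm_eq_abs, abs_of_nonneg (by positivity)]
    nlinarith [(hφ01 x).1, (hφ01 x).2]
  have hgfin : ∀ᵐ x ∂ν, g x < ⊤ := ae_of_all _ fun x => lt_of_le_of_lt (hgle x) ENNReal.one_lt_top
  have hφmean : ∫ x, φ x ∂ν = Ft := by
    rw [hφdef]
    rw [integral_toReal hg.aemeasurable hgfin, ← hPA, hFt]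
  -- identification of the conditional expectation
  have hm' : MeasurableSpace.comap X mE ≤ m0 := hX.comap_le
  have hXm' : Measurable[MeasurableSpace.comap X mE] X := fun s hs => ⟨s, hs, rfl⟩
  have hcond : (fun ω => φ (X ω)) =ᵐ[P]
      MeasureTheory.condExp (MeasurableSpace.comap X mE) P (Set.indicator A fun _ => (1:ℝ)) := by
    refine ae_eq_condExp_of_forall_setIntegral_eq hm'
      ((integrable_const 1).indicator hAm) (fun s _ _ => ?_) (fun s hs _ => ?_) ?_
    · refine Integrable.integrableOn ?_
      refine Integrable.mono' (integrable_const 1) (hφ.comp hX).aestronglyMeasurable ?_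
      filter_upwards with ω
      rw [Real.norm_eq_abs, abs_of_nonneg (hφ01 _).1]
      exact (hφ01 _).2
    · obtain ⟨B, hB, rfl⟩ := hs
      have hright : ∫ ω in X ⁻¹' B, Set.indicator A (fun _ => (1:ℝ)) ω ∂P
          = (P (A ∩ X ⁻¹' B)).toReal := by
        rw [integral_indicator hAm, setIntegral_const, smul_eq_mul, mul_one,
          measureReal_def, Measure.restrict_apply hAm]
      calc ∫ ω in X ⁻¹' B, φ (X ω) ∂P
          = ∫ y in B, φ y ∂ν := (setIntegral_map hB hφ.aestronglyMeasurable
            hX.aemeasurable).symm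
        _ = (∫⁻ y in B, g y ∂ν).toReal := integral_toReal hg.aemeasurable.restrict
            (ae_restrict_of_ae hgfin)
        _ = (P (A ∩ X ⁻¹' B)).toReal := by rw [hkeyB B hB]
        _ = ∫ ω in X ⁻¹' B, Set.indicator A (fun _ => (1:ℝ)) ω ∂P := hright.symm
    · exact (hφ.comp hXm').stronglyMeasurable.aestronglyMeasurable
  -- the second moment of φ
  set A' : Set Ω := {ω | f (X ω, Xt' ω) ≤ t} with hA'def
  have hφsq_eq : ∫ x, φ x ^ 2 ∂ν = (P (A ∩ A')).toReal := by
    set T : Set (E × E' × E') :=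
      ((fun p : E × E' × E' => (p.1, p.2.1)) ⁻¹' S) ∩
      ((fun p : E × E' × E' => (p.1, p.2.2)) ⁻¹' S) with hTdef
    have hT : MeasurableSet T :=
      ((measurable_fst.prodMk (measurable_fst.comp measurable_snd)) hS).inter
        ((measurable_fst.prodMk (measurable_snd.comp measurable_snd)) hS)
    have htm : Measurable (fun ω => (X ω, (Xt ω, Xt' ω))) := hX.prodMk (hXt.prodMk hXt')
    have hAA' : A ∩ A' = (fun ω => (X ω, (Xt ω, Xt' ω))) ⁻¹' T := by
      ext ω; simp [hTdef, hAdef, hA'def, hSdef]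
    have hsec : ∀ x : E, Prod.mk x ⁻¹' T = (Prod.mk x ⁻¹' S) ×ˢ (Prod.mk x ⁻¹' S) := by
      intro x; ext ⟨y, y'⟩; simp [hTdef, Set.mem_prod]
    have hPAA : P (A ∩ A') = ∫⁻ x, g x * g x ∂ν := by
      rw [hAA', ← Measure.map_apply htm hT, htrip, Measure.prod_apply hT]
      refine lintegral_congr fun x => ?_
      rw [hsec, Measure.prod_prod]
    have hfin2 : ∀ᵐ x ∂ν, g x * g x < ⊤ := ae_of_all _ fun x =>
      lt_of_le_of_lt (mul_le_one' (hgle x) (hgle x)) ENNReal.one_lt_top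
    have : ∫ x, φ x ^ 2 ∂ν = ∫ x, (g x * g x).toReal ∂ν := by
      refine integral_congr_ae (ae_of_all _ fun x => ?_)
      show φ x ^ 2 = (g x * g x).toReal
      rw [pow_two, hφdef, ← ENNReal.toReal_mul]
    rw [this, integral_toReal (f := fun x => g x * g x) (hg.aemeasurable.mul hg.aemeasurable) hfin2, hPAA]
  -- put everything together
  have h1 : (fun ω => (Ft - MeasureTheory.condExp (MeasurableSpace.comap X mE) P
      (Set.indicator A fun _ => (1 : ℝ)) ω) ^ 2) =ᵐ[P] fun ω => (Ft - φ (X ω)) ^ 2 := by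
    filter_upwards [hcond] with ω h
    rw [← h]
  have h2 : ∫ ω, (Ft - φ (X ω)) ^ 2 ∂P = ∫ x, (Ft - φ x) ^ 2 ∂ν :=
    (integral_map hX.aemeasurable
      ((measurable_const.sub hφ).pow_const 2).aestronglyMeasurable).symm
  have h3 : ∫ x, (Ft - φ x) ^ 2 ∂ν = Ft ^ 2 - 2 * Ft * (∫ x, φ x ∂ν) + ∫ x, φ x ^ 2 ∂ν := by
    have hexp : (fun x => (Ft - φ x) ^ 2)
        = fun x => (Ft ^ 2 - 2 * Ft * φ x) + φ x ^ 2 := by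
      funext x; ring
    have i1 : Integrable (fun x => Ft ^ 2 - 2 * Ft * φ x) ν := by
      exact (integrable_const _).sub (hφint.const_mul _)
    have i2 : Integrable (fun x => 2 * Ft * φ x) ν := hφint.const_mul _
    rw [hexp, integral_add i1 hφsqint, integral_sub (integrable_const _) i2,
      integral_const, integral_const_mul]
    simp [measure_univ]
  calc ∫ ω, (Ft - MeasureTheory.condExp (MeasurableSpace.comap X mE) P
        (Set.indicator {ω | f (X ω, Xt ω) ≤ t} fun _ => (1 : ℝ)) ω) ^ 2 ∂P
      = ∫ ω, (Ft - φ (X ω)) ^ 2 ∂P := integral_congr_ae h1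
    _ = Ft ^ 2 - 2 * Ft * (∫ x, φ x ∂ν) + ∫ x, φ x ^ 2 ∂ν := by rw [h2, h3]
    _ = (P (A ∩ A')).toReal - Ft ^ 2 := by rw [hφmean, hφsq_eq]; ring

end CondExp


section Final

lemma if_mul_if_max (x y t : ℝ) :
    (if x ≤ t then (1:ℝ) else 0) * (if y ≤ t then (1:ℝ) else 0)
      = if max x y ≤ t then (1:ℝ) else 0 := by
  by_cases hx : x ≤ t <;> by_cases hy : y ≤ t <;> simp [hx, hy, max_le_iff]

lemma final_estimate (N : ℕ) (a b w : ℕ → ℝ) (Gm F : ℝ → ℝ) {ε : ℝ} (hε : 0 ≤ ε)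
    (hgcM : ∀ t, |(N:ℝ)⁻¹ * ∑ j ∈ Finset.range N,
      (if max (a j) (b j) ≤ t then (1:ℝ) else 0) - Gm t| ≤ ε)
    (hgc1 : ∀ t, |(N:ℝ)⁻¹ * ∑ j ∈ Finset.range N,
      (if a j ≤ t then (1:ℝ) else 0) - F t| ≤ ε)
    (hgc2 : ∀ t, |(N:ℝ)⁻¹ * ∑ j ∈ Finset.range N,
      (if b j ≤ t then (1:ℝ) else 0) - F t| ≤ ε)
    (hF0 : ∀ t, 0 ≤ F t) (hF1 : ∀ t, F t ≤ 1) :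
    |(N:ℝ)⁻¹ * ∑ k ∈ Finset.range N,
      ((N:ℝ)⁻¹ * ∑ j ∈ Finset.range N,
        (if a j ≤ w k then (1:ℝ) else 0) * (if b j ≤ w k then (1:ℝ) else 0)
       - ((2*N:ℝ)⁻¹ * ∑ j ∈ Finset.range N,
          ((if a j ≤ w k then (1:ℝ) else 0) + (if b j ≤ w k then (1:ℝ) else 0)))^2)
     - (∑ k ∈ Finset.range N, (Gm (w k) - F (w k)^2))/N| ≤ 3*ε := by
  set C1 : ℝ → ℝ := fun t => (N:ℝ)⁻¹ * ∑ j ∈ Finset.range N,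
    (if a j ≤ t then (1:ℝ) else 0) with hC1
  set C2 : ℝ → ℝ := fun t => (N:ℝ)⁻¹ * ∑ j ∈ Finset.range N,
    (if b j ≤ t then (1:ℝ) else 0) with hC2
  set A : ℝ → ℝ := fun t => (N:ℝ)⁻¹ * ∑ j ∈ Finset.range N,
    (if max (a j) (b j) ≤ t then (1:ℝ) else 0) with hA
  -- bounds on C1, C2
  have hCbdd : ∀ (c : ℕ → ℝ) (t : ℝ), 0 ≤ (N:ℝ)⁻¹ * ∑ j ∈ Finset.range N,
      (if c j ≤ t then (1:ℝ) else 0) ∧ (N:ℝ)⁻¹ * ∑ j ∈ Finset.range N,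
      (if c j ≤ t then (1:ℝ) else 0) ≤ 1 := by
    intro c t
    constructor
    · refine mul_nonneg (by positivity) (Finset.sum_nonneg fun j _ => ?_)
      by_cases h : c j ≤ t <;> simp [h]
    · rcases Nat.eq_zero_or_pos N with h | h
      · simp [h]
      · have hNpos : (0:ℝ) < N := by exact_mod_cast h
        have hsum : ∑ j ∈ Finset.range N, (if c j ≤ t then (1:ℝ) else 0) ≤ N := by
          calc ∑ j ∈ Finset.range N, (if c j ≤ t then (1:ℝ) else 0)
              ≤ ∑ _j ∈ Finset.range N, (1:ℝ) := Finset.sum_le_sum fun j _ => by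
                by_cases h : c j ≤ t <;> simp [h]
            _ = N := by simp
        calc (N:ℝ)⁻¹ * ∑ j ∈ Finset.range N, (if c j ≤ t then (1:ℝ) else 0)
            ≤ (N:ℝ)⁻¹ * N := mul_le_mul_of_nonneg_left hsum (by positivity)
          _ = 1 := by field_simp
  have hgcM' : ∀ t, |A t - Gm t| ≤ ε := hgcM
  have hgc1' : ∀ t, |C1 t - F t| ≤ ε := hgc1
  have hgc2' : ∀ t, |C2 t - F t| ≤ ε := hgc2
  have hC1bdd : ∀ t, 0 ≤ C1 t ∧ C1 t ≤ 1 := hCbdd a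
  have hC2bdd : ∀ t, 0 ≤ C2 t ∧ C2 t ≤ 1 := hCbdd b
  -- rewrite the double products and B
  have hprod : ∀ k, (N:ℝ)⁻¹ * ∑ j ∈ Finset.range N,
      (if a j ≤ w k then (1:ℝ) else 0) * (if b j ≤ w k then (1:ℝ) else 0) = A (w k) := by
    intro k
    rw [hA]
    congr 1
    exact Finset.sum_congr rfl fun j _ => if_mul_if_max _ _ _
  have hB : ∀ k, (2*N:ℝ)⁻¹ * ∑ j ∈ Finset.range N,
      ((if a j ≤ w k then (1:ℝ) else 0) + (if b j ≤ w k then (1:ℝ) else 0))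
      = (C1 (w k) + C2 (w k))/2 := by
    intro k
    rw [Finset.sum_add_distrib, hC1, hC2, mul_inv]
    ring
  -- per-k bound
  have hk : ∀ k, |A (w k) - ((C1 (w k) + C2 (w k))/2)^2 - (Gm (w k) - F (w k)^2)| ≤ 3*ε := by
    intro k
    set t := w k
    have h2 := abs_le.1 (hgc1' t)
    have h3 := abs_le.1 (hgc2' t)
    have hBle : |(C1 t + C2 t)/2 - F t| ≤ ε := by
      rw [abs_le]
      constructor <;> linarith [h2.1, h2.2, h3.1, h3.2]
    have hBbdd : 0 ≤ (C1 t + C2 t)/2 ∧ (C1 t + C2 t)/2 ≤ 1 := by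
      constructor <;> linarith [(hC1bdd t).1, (hC1bdd t).2, (hC2bdd t).1, (hC2bdd t).2]
    have hsq : |((C1 t + C2 t)/2)^2 - F t^2| ≤ 2*ε := by
      have heq : ((C1 t + C2 t)/2)^2 - F t^2
          = ((C1 t + C2 t)/2 - F t) * ((C1 t + C2 t)/2 + F t) := by ring
      rw [heq, abs_mul]
      have h4 : |(C1 t + C2 t)/2 + F t| ≤ 2 := by
        rw [abs_le]
        constructor <;> linarith [hBbdd.1, hBbdd.2, hF0 t, hF1 t]
      calc |(C1 t + C2 t)/2 - F t| * |(C1 t + C2 t)/2 + F t|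
          ≤ ε * 2 := mul_le_mul hBle h4 (abs_nonneg _) hε
        _ = 2*ε := by ring
    calc |A t - ((C1 t + C2 t)/2)^2 - (Gm t - F t^2)|
        = |(A t - Gm t) - (((C1 t + C2 t)/2)^2 - F t^2)| := by ring_nf
      _ ≤ |A t - Gm t| + |((C1 t + C2 t)/2)^2 - F t^2| := abs_sub _ _
      _ ≤ ε + 2*ε := add_le_add (hgcM' t) hsq
      _ = 3*ε := by ring
  -- sum up
  have hrw : (N:ℝ)⁻¹ * ∑ k ∈ Finset.range N,
      ((N:ℝ)⁻¹ * ∑ j ∈ Finset.range N,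
        (if a j ≤ w k then (1:ℝ) else 0) * (if b j ≤ w k then (1:ℝ) else 0)
       - ((2*N:ℝ)⁻¹ * ∑ j ∈ Finset.range N,
          ((if a j ≤ w k then (1:ℝ) else 0) + (if b j ≤ w k then (1:ℝ) else 0)))^2)
     - (∑ k ∈ Finset.range N, (Gm (w k) - F (w k)^2))/N
     = (N:ℝ)⁻¹ * ∑ k ∈ Finset.range N,
        (A (w k) - ((C1 (w k) + C2 (w k))/2)^2 - (Gm (w k) - F (w k)^2)) := by
    rw [div_eq_inv_mul, ← mul_sub, ← Finset.sum_sub_distrib]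
    congr 1
    refine Finset.sum_congr rfl fun k _ => ?_
    rw [hprod k, hB k]
  rw [hrw, abs_mul, abs_inv, Nat.abs_cast]
  have habs : |∑ k ∈ Finset.range N,
      (A (w k) - ((C1 (w k) + C2 (w k))/2)^2 - (Gm (w k) - F (w k)^2))|
      ≤ N * (3*ε) := by
    calc |∑ k ∈ Finset.range N, (A (w k) - ((C1 (w k) + C2 (w k))/2)^2 - (Gm (w k) - F (w k)^2))|
        ≤ ∑ k ∈ Finset.range N, |A (w k) - ((C1 (w k) + C2 (w k))/2)^2 - (Gm (w k) - F (w k)^2)| :=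
          Finset.abs_sum_le_sum_abs _ _
      _ ≤ ∑ _k ∈ Finset.range N, 3*ε := Finset.sum_le_sum fun k _ => hk k
      _ = N * (3*ε) := by rw [Finset.sum_const, Finset.card_range]; ring
  calc (N:ℝ)⁻¹ * |∑ k ∈ Finset.range N,
        (A (w k) - ((C1 (w k) + C2 (w k))/2)^2 - (Gm (w k) - F (w k)^2))|
      ≤ (N:ℝ)⁻¹ * (N * (3*ε)) := mul_le_mul_of_nonneg_left habs (by positivity)
    _ = ((N:ℝ)⁻¹ * N) * (3*ε) := by ring
    _ ≤ 1 * (3*ε) := by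
        refine mul_le_mul_of_nonneg_right ?_ (by positivity)
        rcases Nat.eq_zero_or_pos N with h | h
        · simp [h]
        · have hNpos : (0:ℝ) < N := by exact_mod_cast h
          rw [inv_mul_cancel₀ (ne_of_gt hNpos)]
    _ = 3*ε := one_mul _

end Final


end CvMAux

open CvMAux in
/-- **Strong consistency of the Pick-and-Freeze estimator of the Cramér–von Mises
index.** The empirical estimator `D̂_N` built from i.i.d. copies of the
Pick-and-Freeze pair and an independent sample with the law of `Z` converges almost
surely to the Cramér–von Mises index `D = ∫ E[(F(t) − F^v(t))²] dF(t)`. -/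
theorem cramer_von_mises_estimator_consistent
    {Ω : Type*} {E E' : Type u} [m0 : MeasurableSpace Ω] [mE : MeasurableSpace E]
    [mE' : MeasurableSpace E'] (P : Measure Ω) [IsProbabilityMeasure P]
    (X : Ω → E) (Xt Xt' : Ω → E')
    (hX : Measurable X) (hXt : Measurable Xt) (hXt' : Measurable Xt')
    (hindep : iIndepFun
      (β := fun i : Option (Fin 2) => Option.elim i E fun _ => E')
      (m := fun i => match i with | none => mE | some _ => mE')
      (fun i => match i with | none => X | some j => (if j = 0 then Xt else Xt')) P)
    (hid : Measure.map Xt' P = Measure.map Xt P)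
    (f : E × E' → ℝ) (hf : Measurable f)
    (Z Z2 : Ω → ℝ) (hZdef : ∀ ω, Z ω = f (X ω, Xt ω))
    (hZ2def : ∀ ω, Z2 ω = f (X ω, Xt' ω))
    -- the distribution function of `Z`, the conditional one given `X`, and the index
    (F : ℝ → ℝ) (hF : ∀ t, F t = (P {ω | Z ω ≤ t}).toReal)
    (Fv : ℝ → Ω → ℝ)
    (hFv : ∀ t, Fv t = MeasureTheory.condExp (MeasurableSpace.comap X mE) P
      (Set.indicator {ω | Z ω ≤ t} fun _ => (1 : ℝ)))
    (D : ℝ) (hD : D = ∫ t, (∫ ω, (F t - Fv t ω) ^ 2 ∂P) ∂(Measure.map Z P))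
    -- i.i.d. copies of the Pick-and-Freeze pair and an independent i.i.d. sample
    (ZP : ℕ → Ω → ℝ × ℝ) (W : ℕ → Ω → ℝ)
    (hZPindep : iIndepFun (m := fun _ => inferInstance) ZP P)
    (hWindep : iIndepFun (m := fun _ => inferInstance) W P)
    (hZPlaw : ∀ j, Measure.map (ZP j) P = Measure.map (fun ω => (Z ω, Z2 ω)) P)
    (hWlaw : ∀ k, Measure.map (W k) P = Measure.map Z P)
    (hZPW : IndepFun (fun ω j => ZP j ω) (fun ω k => W k ω) P)
    -- the empirical estimator
    (Dhat : ℕ → Ω → ℝ)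
    (hDhat : ∀ N ω, Dhat N ω = (N : ℝ)⁻¹ * ∑ k ∈ Finset.range N,
      ((N : ℝ)⁻¹ * ∑ j ∈ Finset.range N,
          (if (ZP j ω).1 ≤ W k ω then (1 : ℝ) else 0)
            * (if (ZP j ω).2 ≤ W k ω then (1 : ℝ) else 0)
        - ((2 * N : ℝ)⁻¹ * ∑ j ∈ Finset.range N,
            ((if (ZP j ω).1 ≤ W k ω then (1 : ℝ) else 0)
              + (if (ZP j ω).2 ≤ W k ω then (1 : ℝ) else 0))) ^ 2)) :
    ∀ᵐ ω ∂P, Tendsto (fun N => Dhat N ω) atTop (nhds D) := by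
  classical
  have hZfun : Z = fun ω => f (X ω, Xt ω) := funext hZdef
  have hZ2fun : Z2 = fun ω => f (X ω, Xt' ω) := funext hZ2def
  have hZm : Measurable Z := by rw [hZfun]; exact hf.comp (hX.prodMk hXt)
  have hZ2m : Measurable Z2 := by rw [hZ2fun]; exact hf.comp (hX.prodMk hXt')
  -- independence structure
  have hind1 : IndepFun X Xt P := by
    have h := hindep.indepFun (show (none : Option (Fin 2)) ≠ some 0 by simp)
    simpa using h
  have hind2 : IndepFun X Xt' P := by
    have h := hindep.indepFun (show (none : Option (Fin 2)) ≠ some 1 by simp)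
    simpa using h
  have hind4 : IndepFun Xt Xt' P := by
    have h := hindep.indepFun (show (some 0 : Option (Fin 2)) ≠ some 1 by simp)
    simpa using h
  have hind3 : IndepFun (fun ω => (Xt ω, Xt' ω)) X P := by
    have h := hindep.indepFun_prodMk ?_ (some 0) (some 1) none (by simp) (by simp)
    · exact h
    · intro i
      match i with
      | none => exact hX
      | some j =>
        show Measurable (if j = 0 then Xt else Xt')
        by_cases h : j = 0
        · simp only [if_pos h]; exact hXt
        · simp only [if_neg h]; exact hXt'
  -- laws of pairs and triples
  have hmapXXt : Measure.map (fun ω => (X ω, Xt ω)) P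
      = (Measure.map X P).prod (Measure.map Xt P) :=
    (indepFun_iff_map_prod_eq_prod_map_map hX.aemeasurable hXt.aemeasurable).1 hind1
  have hmapXXt' : Measure.map (fun ω => (X ω, Xt' ω)) P
      = (Measure.map X P).prod (Measure.map Xt' P) :=
    (indepFun_iff_map_prod_eq_prod_map_map hX.aemeasurable hXt'.aemeasurable).1 hind2
  have hmapTT' : Measure.map (fun ω => (Xt ω, Xt' ω)) P
      = (Measure.map Xt P).prod (Measure.map Xt' P) :=
    (indepFun_iff_map_prod_eq_prod_map_map hXt.aemeasurable hXt'.aemeasurable).1 hind4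
  have htrip : Measure.map (fun ω => (X ω, (Xt ω, Xt' ω))) P
      = (Measure.map X P).prod ((Measure.map Xt P).prod (Measure.map Xt P)) := by
    have h := (indepFun_iff_map_prod_eq_prod_map_map hX.aemeasurable
      (hXt.prodMk hXt').aemeasurable).1 hind3.symm
    rw [h, hmapTT', hid]
  have hlawZ2 : Measure.map Z2 P = Measure.map Z P := by
    have e2 : Measure.map Z2 P = Measure.map f (Measure.map (fun ω => (X ω, Xt' ω)) P) := by
      rw [Measure.map_map hf (hX.prodMk hXt')]
      rw [hZ2fun]; rfl
    have e1 : Measure.map Z P = Measure.map f (Measure.map (fun ω => (X ω, Xt ω)) P) := by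
      rw [Measure.map_map hf (hX.prodMk hXt)]
      rw [hZfun]; rfl
    rw [e1, e2, hmapXXt, hmapXXt', hid]
  -- a.e.-measurability of the samples
  have hpairm : Measurable (fun ω => (Z ω, Z2 ω)) := hZm.prodMk hZ2m
  haveI hprobZZ2 : IsProbabilityMeasure (Measure.map (fun ω => (Z ω, Z2 ω)) P) :=
    Measure.isProbabilityMeasure_map hpairm.aemeasurable
  haveI hprobZ : IsProbabilityMeasure (Measure.map Z P) :=
    Measure.isProbabilityMeasure_map hZm.aemeasurable
  have hZPaem : ∀ j, AEMeasurable (ZP j) P := by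
    intro j
    by_contra h
    have h0 := hZPlaw j
    rw [Measure.map_of_not_aemeasurable h] at h0
    have h1 : (Measure.map (fun ω => (Z ω, Z2 ω)) P) Set.univ = 1 := measure_univ
    rw [← h0] at h1
    simp at h1
  have hWaem : ∀ k, AEMeasurable (W k) P := by
    intro k
    by_contra h
    have h0 := hWlaw k
    rw [Measure.map_of_not_aemeasurable h] at h0
    have h1 : (Measure.map Z P) Set.univ = 1 := measure_univ
    rw [← h0] at h1
    simp at h1
  have hmaxm : Measurable (fun p : ℝ × ℝ => max p.1 p.2) := measurable_fst.max measurable_snd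
  have hcomp : ∀ (g : ℝ × ℝ → ℝ), Measurable g → ∀ j,
      Measure.map (fun ω => g (ZP j ω)) P = Measure.map (fun ω => g (Z ω, Z2 ω)) P := by
    intro g hg j
    have h1 : Measure.map (fun ω => g (ZP j ω)) P
        = Measure.map g (Measure.map (ZP j) P) :=
      (AEMeasurable.map_map_of_aemeasurable hg.aemeasurable (hZPaem j)).symm
    have h2 : Measure.map g (Measure.map (fun ω => (Z ω, Z2 ω)) P)
        = Measure.map (fun ω => g (Z ω, Z2 ω)) P := Measure.map_map hg hpairm
    rw [h1, hZPlaw j, h2]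
  -- the three empirical sequences
  have hY1law : ∀ j, Measure.map (fun ω => (ZP j ω).1) P = Measure.map Z P := fun j =>
    hcomp _ measurable_fst j
  have hY2law : ∀ j, Measure.map (fun ω => (ZP j ω).2) P = Measure.map Z P := fun j =>
    (hcomp _ measurable_snd j).trans hlawZ2
  have hMlaw : ∀ j, Measure.map (fun ω => max (ZP j ω).1 (ZP j ω).2) P
      = Measure.map (fun ω => max (Z ω) (Z2 ω)) P := fun j => hcomp _ hmaxm j
  have gcM := glivenko_cantelli (P := P) (fun j ω => max (ZP j ω).1 (ZP j ω).2)
    (fun j => hmaxm.comp_aemeasurable (hZPaem j))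
    (fun i j hij => (hZPindep.indepFun hij).comp hmaxm hmaxm)
    (fun i => (hMlaw i).trans (hMlaw 0).symm)
  have gc1 := glivenko_cantelli (P := P) (fun j ω => (ZP j ω).1)
    (fun j => measurable_fst.comp_aemeasurable (hZPaem j))
    (fun i j hij => (hZPindep.indepFun hij).comp measurable_fst measurable_fst)
    (fun i => (hY1law i).trans (hY1law 0).symm)
  have gc2 := glivenko_cantelli (P := P) (fun j ω => (ZP j ω).2)
    (fun j => measurable_snd.comp_aemeasurable (hZPaem j))
    (fun i j hij => (hZPindep.indepFun hij).comp measurable_snd measurable_snd)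
    (fun i => (hY2law i).trans (hY2law 0).symm)
  -- identify the limits
  set Gmx : ℝ → ℝ := fun t => (P ({ω | Z ω ≤ t} ∩ {ω | Z2 ω ≤ t})).toReal with hGmxdef
  have hcdfM : ∀ t, cdfR (Measure.map (fun ω => max (ZP 0 ω).1 (ZP 0 ω).2) P) t = Gmx t := by
    intro t
    rw [hMlaw 0]
    show ((Measure.map (fun ω => max (Z ω) (Z2 ω)) P) (Set.Iic t)).toReal = _
    rw [Measure.map_apply (hZm.max hZ2m) measurableSet_Iic]
    have hset : (fun ω => max (Z ω) (Z2 ω)) ⁻¹' (Set.Iic t)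
        = {ω | Z ω ≤ t} ∩ {ω | Z2 ω ≤ t} := by
      ext ω
      simp [Set.mem_preimage, Set.mem_Iic, max_le_iff, Set.mem_inter_iff, Set.mem_setOf_eq]
    rw [hset, hGmxdef]
  have hcdf1 : ∀ t, cdfR (Measure.map (fun ω => (ZP 0 ω).1) P) t = F t := by
    intro t
    rw [hY1law 0]
    show ((Measure.map Z P) (Set.Iic t)).toReal = F t
    rw [Measure.map_apply hZm measurableSet_Iic, hF t]
    rfl
  have hcdf2 : ∀ t, cdfR (Measure.map (fun ω => (ZP 0 ω).2) P) t = F t := by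
    intro t
    rw [hY2law 0]
    show ((Measure.map Z P) (Set.Iic t)).toReal = F t
    rw [Measure.map_apply hZm measurableSet_Iic, hF t]
    rfl
  -- regularity of F and Gmx
  have hFmono : Monotone F := by
    intro s t hst
    rw [hF s, hF t]
    exact ENNReal.toReal_mono (measure_ne_top _ _)
      (measure_mono fun ω h => le_trans h hst)
  have hF0 : ∀ t, 0 ≤ F t := fun t => by rw [hF t]; exact ENNReal.toReal_nonneg
  have hF1 : ∀ t, F t ≤ 1 := fun t => by
    rw [hF t]
    exact ENNReal.toReal_le_of_le_ofReal one_pos.le (by simpa using prob_le_one)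
  have hGmono : Monotone Gmx := by
    intro s t hst
    rw [hGmxdef]
    exact ENNReal.toReal_mono (measure_ne_top _ _)
      (measure_mono fun ω h => ⟨le_trans h.1 hst, le_trans h.2 hst⟩)
  have hGm0 : ∀ t, 0 ≤ Gmx t := fun t => by rw [hGmxdef]; exact ENNReal.toReal_nonneg
  have hGm1 : ∀ t, Gmx t ≤ 1 := fun t => by
    rw [hGmxdef]
    exact ENNReal.toReal_le_of_le_ofReal one_pos.le (by simpa using prob_le_one)
  have hFm : Measurable F := hFmono.measurable
  have hGmm : Measurable Gmx := hGmono.measurable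
  have hhm : Measurable (fun t => Gmx t - F t ^ 2) := hGmm.sub (hFm.pow_const 2)
  -- strong law for the W-part
  have hVint : Integrable (fun ω => Gmx (W 0 ω) - F (W 0 ω) ^ 2) P := by
    refine Integrable.mono' (integrable_const 1)
      (hhm.comp_aemeasurable (hWaem 0)).aestronglyMeasurable ?_
    filter_upwards with ω
    rw [Real.norm_eq_abs, abs_le]
    constructor <;>
      nlinarith [hGm0 (W 0 ω), hGm1 (W 0 ω), hF0 (W 0 ω), hF1 (W 0 ω)]
  have hsl := strong_law_ae_real (fun k ω => Gmx (W k ω) - F (W k ω) ^ 2) hVint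
    (fun i j hij => (hWindep.indepFun hij).comp hhm hhm)
    (fun i => IdentDistrib.comp ⟨hWaem i, hWaem 0, (hWlaw i).trans (hWlaw 0).symm⟩ hhm)
  -- identify the mean with D
  have hinner : ∀ t, (∫ ω, (F t - Fv t ω) ^ 2 ∂P) = Gmx t - F t ^ 2 := by
    intro t
    have e1 : {ω | Z ω ≤ t} = {ω | f (X ω, Xt ω) ≤ t} := by
      ext ω; rw [Set.mem_setOf_eq, Set.mem_setOf_eq, hZdef]
    have e2 : {ω | Z2 ω ≤ t} = {ω | f (X ω, Xt' ω) ≤ t} := by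
      ext ω; rw [Set.mem_setOf_eq, Set.mem_setOf_eq, hZ2def]
    have hFt' : F t = (P {ω | f (X ω, Xt ω) ≤ t}).toReal := by rw [hF t, e1]
    have key := integrand_eq (P := P) X Xt Xt' hX hXt hXt' f hf hmapXXt htrip t (F t) hFt'
    rw [hFv t, e1, key]
    simp only [hGmxdef]
    rw [e1, e2]
  have hmean : (∫ ω, (Gmx (W 0 ω) - F (W 0 ω) ^ 2) ∂P) = D := by
    have h1 : ∫ t, (Gmx t - F t ^ 2) ∂(Measure.map (W 0) P)
        = ∫ ω, (Gmx (W 0 ω) - F (W 0 ω) ^ 2) ∂P :=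
      integral_map (hWaem 0) hhm.aestronglyMeasurable
    have h2 : D = ∫ t, (Gmx t - F t ^ 2) ∂(Measure.map Z P) := by
      rw [hD]
      exact integral_congr_ae (ae_of_all _ fun t => hinner t)
    rw [h2, ← hWlaw 0, h1]
  -- combine everything
  filter_upwards [gcM, gc1, gc2, hsl] with ω hgM hg1 hg2 hωsl0
  have hωsl : Tendsto (fun n : ℕ =>
      (∑ k ∈ Finset.range n, (Gmx (W k ω) - F (W k ω) ^ 2)) / n) atTop (nhds D) := by
    rw [← hmean]; exact hωsl0
  have hdiff : Tendsto (fun N : ℕ => Dhat N ω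
      - (∑ k ∈ Finset.range N, (Gmx (W k ω) - F (W k ω) ^ 2)) / N) atTop (nhds 0) := by
    rw [Metric.tendsto_atTop]
    intro ε hε
    have hε8 : 0 < ε/8 := by linarith
    obtain ⟨N0, hN0⟩ := Filter.eventually_atTop.1
      (((hgM (ε/8) hε8).and ((hg1 (ε/8) hε8).and (hg2 (ε/8) hε8))))
    refine ⟨N0, fun N hN => ?_⟩
    obtain ⟨hAe, hC1e, hC2e⟩ := hN0 N hN
    rw [Real.dist_eq, sub_zero]
    have hkey := final_estimate N (fun j => (ZP j ω).1) (fun j => (ZP j ω).2)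
      (fun k => W k ω) Gmx F hε8.le ?_ ?_ ?_ hF0 hF1
    · calc |Dhat N ω - (∑ k ∈ Finset.range N, (Gmx (W k ω) - F (W k ω) ^ 2)) / N|
          ≤ 3*(ε/8) := by rw [hDhat N ω]; exact hkey
        _ < ε := by linarith
    · intro t
      have h := hAe t
      rw [hcdfM t] at h
      have hconv : ∑ j ∈ Finset.range N,
          (Set.Iic t).indicator (fun _ => (1:ℝ)) (max (ZP j ω).1 (ZP j ω).2)
          = ∑ j ∈ Finset.range N, (if max ((ZP j ω).1) ((ZP j ω).2) ≤ t then (1:ℝ) else 0) :=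
        Finset.sum_congr rfl fun j _ => by
          by_cases hle : max ((ZP j ω).1) ((ZP j ω).2) ≤ t <;>
            simp [Set.indicator_apply, Set.mem_Iic, hle]
      rw [hconv] at h
      exact h
    · intro t
      have h := hC1e t
      rw [hcdf1 t] at h
      have hconv : ∑ j ∈ Finset.range N,
          (Set.Iic t).indicator (fun _ => (1:ℝ)) ((ZP j ω).1)
          = ∑ j ∈ Finset.range N, (if (ZP j ω).1 ≤ t then (1:ℝ) else 0) :=
        Finset.sum_congr rfl fun j _ => by
          by_cases hle : (ZP j ω).1 ≤ t <;> simp [Set.indicator_apply, Set.mem_Iic, hle]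
      rw [hconv] at h
      exact h
    · intro t
      have h := hC2e t
      rw [hcdf2 t] at h
      have hconv : ∑ j ∈ Finset.range N,
          (Set.Iic t).indicator (fun _ => (1:ℝ)) ((ZP j ω).2)
          = ∑ j ∈ Finset.range N, (if (ZP j ω).2 ≤ t then (1:ℝ) else 0) :=
        Finset.sum_congr rfl fun j _ => by
          by_cases hle : (ZP j ω).2 ≤ t <;> simp [Set.indicator_apply, Set.mem_Iic, hle]
      rw [hconv] at h
      exact h
  have hfin := hdiff.add hωsl
  rw [zero_add] at hfin
  have heq : (fun N : ℕ => Dhat N ω) = fun N : ℕ =>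
      (Dhat N ω - (∑ k ∈ Finset.range N, (Gmx (W k ω) - F (W k ω) ^ 2)) / N)
      + (∑ k ∈ Finset.range N, (Gmx (W k ω) - F (W k ω) ^ 2)) / N := by
    funext N; ring
  rw [heq]
  exact hfin
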